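/- Let α_h > 0 and let a : W × V → R be a bounded bilinear form on Banach spaces W, V with norm ‖a‖. Suppose u ∈ W, and u_h ∈ W_h ⊂ W satisfy: a(u, v) = l(v) for all v ∈ V and a(u_h, v_h) = l(v_h) for all v_h ∈ V_h ⊂ V, where the discrete inf-sup condition holds: for all w_h ∈ W_h, α_h ‖w_h‖_W ≤ sup_{v_h ∈ V_h, v_h ≠ 0} a(w_h, v_h)/‖v_h‖_V. Then for every w_h ∈ W_h, ‖u - u_h‖_W ≤ (1 + ‖a‖/α_h) ‖u - w_h‖_W. -/
import Mathlib


/-- Generalized Céa Lemma in Banach spaces: if `u` solves `a(u,·) = l` on `V`,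
`u_h ∈ W_h` solves the discrete problem on `V_h`, and the discrete inf-sup
condition with constant `α_h > 0` holds, then for every `w_h ∈ W_h`,
`‖u - u_h‖ ≤ (1 + ‖a‖/α_h) ‖u - w_h‖`. -/
theorem cea_banach {W V : Type*}
    [NormedAddCommGroup W] [NormedSpace ℝ W] [CompleteSpace W]
    [NormedAddCommGroup V] [NormedSpace ℝ V] [CompleteSpace V]
    (a : W →L[ℝ] V →L[ℝ] ℝ) (l : V →L[ℝ] ℝ)
    (Wh : Submodule ℝ W) (Vh : Submodule ℝ V)
    (αh : ℝ) (hαh : 0 < αh)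
    (u : W) (uh : W) (huh : uh ∈ Wh)
    (hu : ∀ v : V, a u v = l v)
    (hdisc : ∀ vh ∈ Vh, a uh vh = l vh)
    (hinfsup : ∀ wh ∈ Wh,
      αh * ‖wh‖ ≤ ⨆ vh : {v : V // v ∈ Vh ∧ v ≠ 0}, a wh (vh : V) / ‖(vh : V)‖) :
    ∀ wh ∈ Wh, ‖u - uh‖ ≤ (1 + ‖a‖ / αh) * ‖u - wh‖ := by
  intro wh hwh
  have key : ‖uh - wh‖ ≤ ‖a‖ / αh * ‖u - wh‖ := by
    have h1 := hinfsup (uh - wh) (Submodule.sub_mem Wh huh hwh)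
    have h2 : (⨆ vh : {v : V // v ∈ Vh ∧ v ≠ 0}, a (uh - wh) (vh : V) / ‖(vh : V)‖)
        ≤ ‖a‖ * ‖u - wh‖ := by
      apply Real.iSup_le
      · rintro ⟨v, hv, hv0⟩
        have heq : a (uh - wh) v = a (u - wh) v := by
          simp only [map_sub, ContinuousLinearMap.sub_apply, hdisc v hv, hu v]
        rw [heq, div_le_iff₀ (norm_pos_iff.mpr hv0)]
        calc a (u - wh) v ≤ |a (u - wh) v| := le_abs_self _
          _ ≤ ‖a‖ * ‖u - wh‖ * ‖v‖ := by
              have := a.le_opNorm₂ (u - wh) v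
              simpa [Real.norm_eq_abs] using this
      · positivity
    have h3 := le_trans h1 h2
    rw [div_mul_eq_mul_div, le_div_iff₀ hαh, mul_comm]
    linarith
  calc ‖u - uh‖ = ‖(u - wh) + (wh - uh)‖ := by rw [sub_add_sub_cancel]
    _ ≤ ‖u - wh‖ + ‖wh - uh‖ := norm_add_le _ _
    _ = ‖u - wh‖ + ‖uh - wh‖ := by rw [norm_sub_rev wh]
    _ ≤ ‖u - wh‖ + ‖a‖/αh * ‖u - wh‖ := by linarith
    _ = (1 + ‖a‖/αh) * ‖u - wh‖ := by ring
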